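/- Define φ on binary words by φ(1^{m_0} 2^{n_0} 1^{m_1} 2^{n_1} ⋯ 1^{m_{d−1}} 2^{n_{d−1}} 1^{m_d} 2^{n_d}) = 1^{m_d−1} 2^{n_0} 1^{m_{d−1}} 2^{n_1} ⋯ 2^{n_{d−2}} 1^{m_1} 2^{n_{d−1}} 1^{m_0+1} 2^{n_d}. Then φ is an involution on the set of binary words on {1,2} (with φ applied to words whose decomposition has m_d ≥ 1). -/

import Mathlib

/-- Count the leading letters of a list equal to `a`; return the count and the rest. -/
def leadCount (a : ℕ) : List ℕ → ℕ × List ℕ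
  | [] => (0, [])
  | b :: rest =>
    if b = a then
      let p := leadCount a rest
      (p.1 + 1, p.2)
    else (0, b :: rest)

def blocksAux : ℕ → List ℕ → List (ℕ × ℕ)
  | 0, _ => []
  | _, [] => []
  | fuel + 1, w =>
    let p := leadCount 1 w
    let q := leadCount 2 p.2
    (p.1, q.1) :: blocksAux fuel q.2

/-- The descent-block decomposition `[(m₀,n₀),…,(m_d,n_d)]` of a binary word
`1^{m₀} 2^{n₀} ⋯ 1^{m_d} 2^{n_d}`. -/
def blocks (w : List ℕ) : List (ℕ × ℕ) := blocksAux w.length w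

/-- The word `1^{m₀} 2^{n₀} ⋯ 1^{m_d} 2^{n_d}` determined by blocks. -/
def blockWord (bs : List (ℕ × ℕ)) : List ℕ :=
  bs.flatMap fun p => List.replicate p.1 1 ++ List.replicate p.2 2

/-- `[(m₀,n₀),…,(m_d,n_d)]` is a valid descent-block decomposition:
`m_i > 0` for `1 ≤ i ≤ d` and `n_j > 0` for `0 ≤ j ≤ d-1`. -/
def ValidBlocks (bs : List (ℕ × ℕ)) : Prop :=
  bs ≠ [] ∧ (∀ p ∈ bs.tail, 0 < p.1) ∧ (∀ p ∈ bs.dropLast, 0 < p.2)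

/-- A word on the alphabet {1,2}. -/
def IsBinary (w : List ℕ) : Prop := ∀ a ∈ w, a = 1 ∨ a = 2

/-- The descent number of a word. -/
def des (w : List ℕ) : ℕ := (w.zip w.tail).countP fun p => decide (p.2 < p.1)

/-- The excedance number of a binary word with `k` ones: the number of
positions `i ≤ k` carrying the letter 2. -/
def exc (w : List ℕ) : ℕ := (w.take (w.count 1)).count 2

/-- `Ψ = Φ₁⁻¹` on binary words, via the descent-block decomposition. -/
def psiBlocks (bs : List (ℕ × ℕ)) : List ℕ :=
  List.replicate (bs.headD (0,0)).1 1
    ++ bs.tail.flatMap (fun p => 2 :: List.replicate (p.1 - 1) 1)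
    ++ bs.dropLast.flatMap (fun p => List.replicate (p.2 - 1) 2 ++ [1])
    ++ List.replicate (bs.getLastD (0,0)).2 2

def Psi (w : List ℕ) : List ℕ := psiBlocks (blocks w)

/-- Foata's second fundamental transformation on binary words. -/
def phi2Blocks (bs : List (ℕ × ℕ)) : List ℕ :=
  bs.tail.reverse.flatMap (fun p => List.replicate (p.1 - 1) 1 ++ [2])
    ++ List.replicate (bs.headD (0,0)).1 1
    ++ bs.dropLast.flatMap (fun p => List.replicate (p.2 - 1) 2 ++ [1])
    ++ List.replicate (bs.getLastD (0,0)).2 2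

def Phi2 (w : List ℕ) : List ℕ := phi2Blocks (blocks w)

/-- The extended Steingrímsson map `Γ` on binary words. -/
def gammaBlocks (bs : List (ℕ × ℕ)) : List ℕ :=
  match bs with
  | [] => []
  | [(m0, n0)] => List.replicate m0 1 ++ List.replicate n0 2
  | (m0, n0) :: rest =>
      List.replicate m0 1
        ++ rest.dropLast.flatMap (fun p => 2 :: List.replicate (p.1 - 1) 1)
        ++ (2 :: List.replicate (rest.getLastD (0,0)).1 1)
        ++ (let ns := n0 :: rest.map Prod.snd
            ns.dropLast.dropLast.flatMap (fun nj => List.replicate (nj - 1) 2 ++ [1])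
              ++ List.replicate (ns.dropLast.getLastD 0 - 1 + ns.getLastD 0) 2)

def Gamma (w : List ℕ) : List ℕ := gammaBlocks (blocks w)

/-- The involution `φ` on binary words. -/
def phi (w : List ℕ) : List ℕ :=
  let bs := blocks w
  let ns := bs.map Prod.snd
  let newms : List ℕ :=
    match (bs.map Prod.fst).reverse with
    | [] => []
    | [a] => [a]
    | a :: rest => (a - 1) :: (rest.dropLast ++ [rest.getLastD 0 + 1])
  blockWord (newms.zip ns)

/-- Fibonacci words: binary words with no two consecutive ones. -/
def IsFib (w : List ℕ) : Prop :=
  IsBinary w ∧ w.Chain' fun a b => ¬(a = 1 ∧ b = 1)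

def FibSet (n : ℕ) : Set (List ℕ) := {w | IsFib w ∧ w.length = n}

/-- Fibonacci words of length `n` ending with the letter 1. -/
def FibSet' (n : ℕ) : Set (List ℕ) :=
  {w | IsFib w ∧ w.length = n ∧ w.getLast? = some 1}

/-- Binary words of length `n` with no two consecutive twos. -/
def GSet (n : ℕ) : Set (List ℕ) :=
  {w | IsBinary w ∧ w.length = n ∧ w.Chain' fun a b => ¬(a = 2 ∧ b = 2)}

/-- The word `1^{m₀} 2^{d+n₀-1} 1 2^{n₁-1} ⋯ 1 2^{n_{d-1}-1} 1 2^{n_d}`. -/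
def Rword (m0 : ℕ) (ns : List ℕ) : List ℕ :=
  match ns with
  | [] => List.replicate m0 1
  | [n0] => List.replicate m0 1 ++ List.replicate n0 2
  | n0 :: rest =>
      List.replicate m0 1 ++ List.replicate (rest.length + n0 - 1) 2
        ++ rest.dropLast.flatMap (fun nj => 1 :: List.replicate (nj - 1) 2)
        ++ (1 :: List.replicate (rest.getLastD 0) 2)

def RSet (n : ℕ) : Set (List ℕ) :=
  {w | ∃ m0 ns, m0 ≤ 1 ∧ ns ≠ [] ∧ (∀ j ∈ List.dropLast ns, 1 ≤ j) ∧
        w = Rword m0 ns ∧ w.length = n}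

/-- The Fibonacci word `1^{m₀} 2^{n₀} 1 2^{n₁} ⋯ 1 2^{n_d}`. -/
def Fword (m0 : ℕ) (ns : List ℕ) : List ℕ :=
  List.replicate m0 1 ++ List.replicate (ns.headD 0) 2
    ++ ns.tail.flatMap fun nj => 1 :: List.replicate nj 2

/-!
Cutting a binary word into its descent blocks `1^{m_i} 2^{n_i}` is a bijection onto the block
lists in which every block but the first contains a 1, every block but the last contains a 2 and
no block is empty, so `φ` may be computed on block lists. There it keeps the `n_i`, reverses the
`m_i` and moves one unit from the new first entry `m_d ≥ 1` to the new last one `m_0`. Doing this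
twice gives back the `m_i`, and the result is again a block decomposition; hence `φ ∘ φ = id`.
-/

theorem leadCount_replicate_append (a k : ℕ) {t : List ℕ} (ht : ∀ b ∈ t.head?, b ≠ a) :
    leadCount a (List.replicate k a ++ t) = (k, t) := by
  induction k with
  | zero =>
    cases t with
    | nil => rfl
    | cons b t => simp [leadCount, ht b rfl]
  | succ k ih => simp [List.replicate_succ, leadCount, ih]

theorem blocksAux_succ_of_ne_nil (fuel : ℕ) {w : List ℕ} (hw : w ≠ []) :
    blocksAux (fuel + 1) w =
      ((leadCount 1 w).1, (leadCount 2 (leadCount 1 w).2).1)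
        :: blocksAux fuel (leadCount 2 (leadCount 1 w).2).2 := by
  cases w
  · exact absurd rfl hw
  · rfl

theorem blockWord_cons (p : ℕ × ℕ) (bs : List (ℕ × ℕ)) :
    blockWord (p :: bs) = List.replicate p.1 1 ++ List.replicate p.2 2 ++ blockWord bs := by
  simp [blockWord]

theorem isBinary_blockWord (bs : List (ℕ × ℕ)) : IsBinary (blockWord bs) := by
  intro a ha
  simp only [blockWord, List.mem_flatMap, List.mem_append, List.mem_replicate] at ha
  obtain ⟨p, -, h | h⟩ := ha
  exacts [.inl h.2, .inr h.2]

/-- Given the first two fields, `zero_notMem` only excludes `[(0, 0)]`: the empty word has the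
decomposition `[]`. -/
structure IsBlockDecomposition (bs : List (ℕ × ℕ)) : Prop where
  fst_pos : ∀ p ∈ bs.tail, 0 < p.1
  snd_pos : ∀ p ∈ bs.dropLast, 0 < p.2
  zero_notMem : ((0, 0) : ℕ × ℕ) ∉ bs

theorem isBlockDecomposition_cons {p : ℕ × ℕ} {bs : List (ℕ × ℕ)} :
    IsBlockDecomposition (p :: bs) ↔
      IsBlockDecomposition bs ∧ p ≠ (0, 0) ∧ ∀ q ∈ bs.head?, 0 < p.2 ∧ 0 < q.1 := by
  cases bs with
  | nil =>
    refine ⟨fun h => ⟨⟨by simp, by simp, by simp⟩, fun hp => h.zero_notMem (by simp [hp]), by simp⟩,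
      fun h => ⟨by simp, by simp, ?_⟩⟩
    simpa [eq_comm] using h.2.1
  | cons q bs =>
    constructor
    · rintro ⟨h1, h2, h3⟩
      refine ⟨⟨fun r hr => h1 r (List.mem_cons_of_mem q hr), fun r hr => h2 r ?_,
        fun h => h3 (List.mem_cons_of_mem p h)⟩, fun hp => h3 (hp ▸ List.mem_cons_self), ?_⟩
      · exact List.dropLast_cons_of_ne_nil (List.cons_ne_nil q bs) ▸ List.mem_cons_of_mem p hr
      · simp only [Option.mem_def, List.head?_cons, Option.some.injEq, forall_eq']
        exact ⟨h2 p (by simp), h1 q List.mem_cons_self⟩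
    · rintro ⟨⟨h1, h2, h3⟩, hp, hq⟩
      simp only [Option.mem_def, List.head?_cons, Option.some.injEq, forall_eq'] at hq
      refine ⟨?_, ?_, ?_⟩
      · simpa [hq.2] using h1
      · rw [List.dropLast_cons_of_ne_nil (List.cons_ne_nil q bs)]
        simpa [hq.1] using h2
      · simpa [hp.symm] using h3

theorem blocksAux_blockWord {bs : List (ℕ × ℕ)} (h : IsBlockDecomposition bs) {fuel : ℕ}
    (hfuel : (blockWord bs).length ≤ fuel) : blocksAux fuel (blockWord bs) = bs := by
  induction bs generalizing fuel with
  | nil => cases fuel <;> rfl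
  | cons p bs ih =>
    obtain ⟨hbs, hp, hhead⟩ := isBlockDecomposition_cons.1 h
    have hpos : 0 < p.1 + p.2 := by
      obtain ⟨m, n⟩ := p
      simp only [ne_eq, Prod.mk.injEq, not_and_or] at hp
      omega
    have hne : List.replicate p.1 1 ++ List.replicate p.2 2 ++ blockWord bs ≠ [] := by
      simp only [ne_eq, List.append_eq_nil_iff, List.replicate_eq_nil_iff]
      omega
    have hnot1 : ∀ b ∈ (List.replicate p.2 2 ++ blockWord bs).head?, b ≠ 1 := by
      rcases Nat.eq_zero_or_pos p.2 with hp2 | hp2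
      · cases bs with
        | nil => simp [hp2, blockWord]
        | cons q bs => simpa [hp2] using hhead q rfl
      · obtain ⟨k, hk⟩ := Nat.exists_eq_add_of_lt hp2
        simp [hk, List.replicate_succ]
    have hnot2 : ∀ b ∈ (blockWord bs).head?, b ≠ 2 := by
      cases bs with
      | nil => simp [blockWord]
      | cons q bs =>
        obtain ⟨k, hk⟩ := Nat.exists_eq_add_of_lt (hhead q rfl).2
        simp [blockWord_cons, hk, List.replicate_succ]
    obtain ⟨fuel, rfl⟩ := Nat.exists_eq_add_of_lt (lt_of_lt_of_le (List.length_pos_of_ne_nil hne)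
      (blockWord_cons p bs ▸ hfuel))
    rw [blockWord_cons, blocksAux_succ_of_ne_nil _ hne, List.append_assoc,
      leadCount_replicate_append 1 p.1 hnot1, leadCount_replicate_append 2 p.2 hnot2,
      ih hbs (by simp [blockWord_cons] at hfuel; omega)]

theorem blocks_blockWord {bs : List (ℕ × ℕ)} (h : IsBlockDecomposition bs) :
    blocks (blockWord bs) = bs :=
  blocksAux_blockWord h le_rfl

theorem exists_isBlockDecomposition_blockWord_eq {w : List ℕ} (hw : IsBinary w) :
    ∃ bs, IsBlockDecomposition bs ∧ blockWord bs = w := by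
  induction w with
  | nil => exact ⟨[], ⟨by simp, by simp, by simp⟩, rfl⟩
  | cons a w ih =>
    obtain ⟨bs, hbs, rfl⟩ := ih fun b hb => hw b (List.mem_cons_of_mem a hb)
    rcases hw a List.mem_cons_self with rfl | rfl
    · cases bs with
      | nil => exact ⟨[(1, 0)], isBlockDecomposition_cons.2 ⟨hbs, by simp, by simp⟩, rfl⟩
      | cons p bs =>
        obtain ⟨hbs', -, hhead⟩ := isBlockDecomposition_cons.1 hbs
        refine ⟨(p.1 + 1, p.2) :: bs, isBlockDecomposition_cons.2 ⟨hbs', by simp, hhead⟩, ?_⟩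
        simp [blockWord_cons, List.replicate_succ]
    · cases bs with
      | nil => exact ⟨[(0, 1)], isBlockDecomposition_cons.2 ⟨hbs, by simp, by simp⟩, rfl⟩
      | cons p bs =>
        obtain ⟨hbs', -, hhead⟩ := isBlockDecomposition_cons.1 hbs
        rcases Nat.eq_zero_or_pos p.1 with hp1 | hp1
        · refine ⟨(0, p.2 + 1) :: bs, isBlockDecomposition_cons.2
            ⟨hbs', by simp, fun q hq => ⟨Nat.succ_pos _, (hhead q hq).2⟩⟩, ?_⟩
          simp [blockWord_cons, hp1, List.replicate_succ]
        · exact ⟨(0, 1) :: p :: bs, isBlockDecomposition_cons.2 ⟨hbs, by simp, by simp [hp1]⟩,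
            by simp [blockWord_cons]⟩

def moveUnitToLast : List ℕ → List ℕ
  | [] => []
  | [a] => [a]
  | a :: rest => (a - 1) :: (rest.dropLast ++ [rest.getLastD 0 + 1])

theorem moveUnitToLast_cons_append (a b : ℕ) (l : List ℕ) :
    moveUnitToLast (a :: (l ++ [b])) = (a - 1) :: (l ++ [b + 1]) := by
  cases l with
  | nil => rfl
  | cons c l =>
    change (a - 1) :: ((c :: l ++ [b]).dropLast ++ [(c :: l ++ [b]).getLastD 0 + 1]) = _
    rw [List.dropLast_concat, List.getLastD_concat]

theorem length_moveUnitToLast (l : List ℕ) : (moveUnitToLast l).length = l.length := by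
  rcases l with _ | ⟨a, l⟩
  · rfl
  rcases l.eq_nil_or_concat' with rfl | ⟨l, b, rfl⟩
  · rfl
  · simp [moveUnitToLast_cons_append]

theorem moveUnitToLast_reverse_moveUnitToLast_reverse {l : List ℕ} (h : ∀ a ∈ l.tail, 0 < a) :
    moveUnitToLast (moveUnitToLast l.reverse).reverse = l := by
  rcases l with _ | ⟨a, l⟩
  · rfl
  rcases l.eq_nil_or_concat' with rfl | ⟨l, b, rfl⟩
  · rfl
  · have hb : 0 < b := h b (by simp)
    simp [moveUnitToLast_cons_append, Nat.sub_add_cancel hb]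

/-- `phi w` unfolds definitionally to `blockWord (phiBlocks (blocks w))`. -/
def phiBlocks (bs : List (ℕ × ℕ)) : List (ℕ × ℕ) :=
  (moveUnitToLast (bs.map Prod.fst).reverse).zip (bs.map Prod.snd)

theorem map_fst_phiBlocks (bs : List (ℕ × ℕ)) :
    (phiBlocks bs).map Prod.fst = moveUnitToLast (bs.map Prod.fst).reverse :=
  List.map_fst_zip (by simp [length_moveUnitToLast])

theorem map_snd_phiBlocks (bs : List (ℕ × ℕ)) :
    (phiBlocks bs).map Prod.snd = bs.map Prod.snd :=
  List.map_snd_zip (by simp [length_moveUnitToLast])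

theorem phiBlocks_phiBlocks {bs : List (ℕ × ℕ)} (h : ∀ p ∈ bs.tail, 0 < p.1) :
    phiBlocks (phiBlocks bs) = bs := by
  rw [phiBlocks, map_fst_phiBlocks, map_snd_phiBlocks,
    moveUnitToLast_reverse_moveUnitToLast_reverse (by simpa [← List.map_tail] using h)]
  exact (List.zip_of_prod rfl rfl).symm

theorem phiBlocks_cons_append (p q : ℕ × ℕ) (bs : List (ℕ × ℕ)) :
    phiBlocks (p :: (bs ++ [q])) =
      (q.1 - 1, p.2) :: ((bs.map Prod.fst).reverse.zip (bs.map Prod.snd) ++ [(p.1 + 1, q.2)]) := by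
  simp [phiBlocks, moveUnitToLast_cons_append, List.zip_append]

theorem IsBlockDecomposition.phiBlocks {bs : List (ℕ × ℕ)} (h : IsBlockDecomposition bs) :
    IsBlockDecomposition (phiBlocks bs) := by
  rcases bs with _ | ⟨p, bs⟩
  · exact h
  rcases bs.eq_nil_or_concat' with rfl | ⟨bs, q, rfl⟩
  · exact h
  have hdrop : (p :: (bs ++ [q])).dropLast = p :: bs := by
    rw [← List.cons_append, List.dropLast_concat]
  have hp : 0 < p.2 := h.snd_pos p (by simp [hdrop])
  have hmid : ∀ r ∈ (bs.map Prod.fst).reverse.zip (bs.map Prod.snd), 0 < r.1 ∧ 0 < r.2 := by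
    rintro ⟨m, n⟩ hr
    obtain ⟨hm, hn⟩ := List.of_mem_zip hr
    simp only [List.mem_reverse, List.mem_map] at hm hn
    obtain ⟨r, hrm, rfl⟩ := hm
    obtain ⟨r', hr', rfl⟩ := hn
    exact ⟨h.fst_pos r (by simp [hrm]), h.snd_pos r' (by simp [hdrop, hr'])⟩
  rw [phiBlocks_cons_append]
  refine ⟨?_, ?_, ?_⟩
  · intro r hr
    rcases List.mem_append.1 hr with hr | hr
    · exact (hmid r hr).1
    · simp [List.mem_singleton.1 hr]
  · rw [← List.cons_append, List.dropLast_concat]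
    rintro r (_ | ⟨_, hr⟩)
    exacts [hp, (hmid r hr).2]
  · intro hr
    rcases List.mem_cons.1 hr with hr | hr
    · exact hp.ne' (congrArg Prod.snd hr).symm
    · rcases List.mem_append.1 hr with hr | hr
      · exact (hmid _ hr).1.ne' rfl
      · simp at hr

theorem phi_blockWord {bs : List (ℕ × ℕ)} (h : IsBlockDecomposition bs) :
    phi (blockWord bs) = blockWord (phiBlocks bs) :=
  congrArg (fun bs => blockWord (phiBlocks bs)) (blocks_blockWord h)

theorem stmt_15 (w : List ℕ) (hw : IsBinary w) :
    IsBinary (phi w) ∧ phi (phi w) = w := by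
  obtain ⟨bs, hbs, rfl⟩ := exists_isBlockDecomposition_blockWord_eq hw
  refine ⟨phi_blockWord hbs ▸ isBinary_blockWord _, ?_⟩
  rw [phi_blockWord hbs, phi_blockWord hbs.phiBlocks, phiBlocks_phiBlocks hbs.fst_pos]
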